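/- For A, B ∈ B(H), the numerical radius of the off-diagonal block operator T = [[O, A],[B, O]] on H ⊕ H satisfies w(T) ≥ (1/2)‖Re(A) + i·Im(B)‖ + (1/4)| ‖A+B*‖ − ‖A−B*‖ |. -/

import Mathlib

open ContinuousLinearMap in
noncomputable def numRad {E : Type*} [NormedAddCommGroup E] [InnerProductSpace ℂ E]
    (T : E →L[ℂ] E) : ℝ :=
  ⨆ x : {x : E // ‖x‖ = 1}, ‖(inner ℂ (T x) (x : E) : ℂ)‖

variable {H : Type*} [NormedAddCommGroup H] [InnerProductSpace ℂ H] [CompleteSpace H]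

/-- `|A| = (A*A)^{1/2}`, the positive square root of `A*A`. -/
noncomputable def absOp (A : H →L[ℂ] H) : H →L[ℂ] H :=
  CFC.sqrt (ContinuousLinearMap.adjoint A * A)

/-- real part of an operator -/
noncomputable def reOp (A : H →L[ℂ] H) : H →L[ℂ] H :=
  (1 / 2 : ℂ) • (A + ContinuousLinearMap.adjoint A)

/-- imaginary part of an operator -/
noncomputable def imOp (A : H →L[ℂ] H) : H →L[ℂ] H :=
  (1 / (2 * Complex.I) : ℂ) • (A - ContinuousLinearMap.adjoint A)

/-- the block diagonal operator `diag(A,B)` on `H ⊕ H` (ℓ²-sum). -/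
noncomputable def blockDiag (A B : H →L[ℂ] H) :
    WithLp 2 (H × H) →L[ℂ] WithLp 2 (H × H) :=
  ((WithLp.prodContinuousLinearEquiv 2 ℂ H H).symm.toContinuousLinearMap).comp
    ((A.prodMap B).comp (WithLp.prodContinuousLinearEquiv 2 ℂ H H).toContinuousLinearMap)

/-- the off-diagonal block operator `[[O,A],[B,O]] : (x,y) ↦ (A y, B x)` on `H ⊕ H`. -/
noncomputable def blockOffDiag (A B : H →L[ℂ] H) :
    WithLp 2 (H × H) →L[ℂ] WithLp 2 (H × H) :=
  ((WithLp.prodContinuousLinearEquiv 2 ℂ H H).symm.toContinuousLinearMap).comp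
    (((A.prodMap B).comp (ContinuousLinearEquiv.prodComm ℂ H H).toContinuousLinearMap).comp
      (WithLp.prodContinuousLinearEquiv 2 ℂ H H).toContinuousLinearMap)


/-!
Evaluating the numerical radius of `T` at `(u, v) / √2` for unit vectors `u`, `v` gives
`|⟪A v, u⟫ + ⟪B u, v⟫| ≤ 2 w(T)`, and at `(u, i v) / √2` the same bound for the difference.
Their real parts are `Re ⟪(A ± B*) v, u⟫`, so `‖A ± B*‖ ≤ 2 w(T)`. Since
`Re A + i Im B = ((A - B*) + (A + B*)*) / 2`, the right-hand side is at most
`(‖A + B*‖ + ‖A - B*‖) / 4 + |‖A + B*‖ - ‖A - B*‖| / 4 = max ‖A ± B*‖ / 2`.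
-/

open ContinuousLinearMap Complex
open scoped InnerProductSpace InnerProduct

section NumericalRadius

variable {E : Type*} [NormedAddCommGroup E] [InnerProductSpace ℂ E] (T : E →L[ℂ] E)

lemma numRad_nonneg : 0 ≤ numRad T :=
  Real.iSup_nonneg fun _ ↦ norm_nonneg _

lemma norm_inner_le_numRad {z : E} (hz : ‖z‖ = 1) : ‖⟪T z, z⟫_ℂ‖ ≤ numRad T := by
  refine le_ciSup (f := fun x : {x : E // ‖x‖ = 1} ↦ ‖⟪T x, (x : E)⟫_ℂ‖) ⟨‖T‖, ?_⟩ ⟨z, hz⟩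
  rintro _ ⟨⟨x, hx⟩, rfl⟩
  simpa [hx] using norm_inner_le_norm (T x) x |>.trans
    (mul_le_mul_of_nonneg_right (T.le_opNorm x) (norm_nonneg x))

lemma norm_inner_le_numRad_mul_sq (z : E) : ‖⟪T z, z⟫_ℂ‖ ≤ numRad T * ‖z‖ ^ 2 := by
  rcases eq_or_ne z 0 with rfl | hz
  · simp
  have hnz : ‖z‖ ≠ 0 := norm_ne_zero_iff.mpr hz
  have h := norm_inner_le_numRad T (z := ((‖z‖⁻¹ : ℝ) : ℂ) • z) (by simp [norm_smul, hnz])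
  rw [map_smul, inner_smul_left, inner_smul_right, norm_mul, norm_mul, RCLike.norm_conj,
    Complex.norm_real, Real.norm_of_nonneg (by positivity)] at h
  rwa [← mul_assoc, ← sq, inv_pow, inv_mul_le_iff₀ (by positivity), mul_comm] at h

end NumericalRadius

section BlockOffDiag

variable (A B : H →L[ℂ] H)

omit [CompleteSpace H] in
lemma blockOffDiag_toLp (u v : H) :
    blockOffDiag A B (WithLp.toLp 2 (u, v)) = WithLp.toLp 2 (A v, B u) := rfl

omit [CompleteSpace H] in
lemma norm_inner_add_inner_le_two_mul_numRad {u v : H} (hu : ‖u‖ = 1) (hv : ‖v‖ = 1) :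
    ‖⟪A v, u⟫_ℂ + ⟪B u, v⟫_ℂ‖ ≤ 2 * numRad (blockOffDiag A B) := by
  have h := norm_inner_le_numRad_mul_sq (blockOffDiag A B) (WithLp.toLp 2 (u, v))
  rw [WithLp.prod_norm_sq_eq_of_L2, blockOffDiag_toLp, WithLp.prod_inner_apply] at h
  simpa [hu, hv, mul_comm, one_add_one_eq_two] using h

omit [CompleteSpace H] in
lemma norm_inner_sub_inner_le_two_mul_numRad {u v : H} (hu : ‖u‖ = 1) (hv : ‖v‖ = 1) :
    ‖⟪A v, u⟫_ℂ - ⟪B u, v⟫_ℂ‖ ≤ 2 * numRad (blockOffDiag A B) := by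
  have h := norm_inner_add_inner_le_two_mul_numRad A B hu (v := I • v) (by simp [norm_smul, hv])
  have hrot : -I * ⟪A v, u⟫_ℂ + I * ⟪B u, v⟫_ℂ = -I * (⟪A v, u⟫_ℂ - ⟪B u, v⟫_ℂ) := by ring
  rwa [map_smul, inner_smul_left, inner_smul_right, conj_I, hrot, norm_mul, norm_neg, norm_I,
    one_mul] at h

lemma norm_add_adjoint_le_two_mul_numRad : ‖A + B†‖ ≤ 2 * numRad (blockOffDiag A B) := by
  refine opNorm_le_of_re_inner_le (by linarith [numRad_nonneg (blockOffDiag A B)])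
    fun v u hv hu ↦ ?_
  calc re ⟪(A + B†) v, u⟫_ℂ = re (⟪A v, u⟫_ℂ + ⟪B u, v⟫_ℂ) := by
        rw [add_apply, inner_add_left, adjoint_inner_left, ← inner_conj_symm v (B u)]
        simp only [add_re, conj_re]
    _ ≤ _ := (re_le_norm _).trans (norm_inner_add_inner_le_two_mul_numRad A B hu hv)

lemma norm_sub_adjoint_le_two_mul_numRad : ‖A - B†‖ ≤ 2 * numRad (blockOffDiag A B) := by
  refine opNorm_le_of_re_inner_le (by linarith [numRad_nonneg (blockOffDiag A B)])
    fun v u hv hu ↦ ?_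
  calc re ⟪(A - B†) v, u⟫_ℂ = re (⟪A v, u⟫_ℂ - ⟪B u, v⟫_ℂ) := by
        rw [sub_apply, inner_sub_left, adjoint_inner_left, ← inner_conj_symm v (B u)]
        simp only [sub_re, conj_re]
    _ ≤ _ := (re_le_norm _).trans (norm_inner_sub_inner_le_two_mul_numRad A B hu hv)

end BlockOffDiag

lemma reOp_add_I_smul_imOp (A B : H →L[ℂ] H) :
    reOp A + I • imOp B = (2⁻¹ : ℂ) • ((A - B†) + (A + B†)†) := by
  have hI : I * (1 / (2 * I)) = 2⁻¹ := by field_simp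
  rw [reOp, imOp, map_add, adjoint_adjoint, smul_smul, hI]
  module

lemma norm_reOp_add_I_smul_imOp_le (A B : H →L[ℂ] H) :
    ‖reOp A + I • imOp B‖ ≤ 2⁻¹ * (‖A - B†‖ + ‖A + B†‖) := by
  rw [reOp_add_I_smul_imOp, norm_smul, norm_inv, RCLike.norm_ofNat, ← adjoint.norm_map (A + B†)]
  gcongr
  exact norm_add_le _ _

theorem numRad_blockOffDiag_lower_bound (A B : H →L[ℂ] H) :
    numRad (blockOffDiag A B)
      ≥ (1 / 2) * ‖reOp A + Complex.I • imOp B‖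
        + (1 / 4) * |‖A + ContinuousLinearMap.adjoint B‖
            - ‖A - ContinuousLinearMap.adjoint B‖| := by
  have hsum := norm_add_adjoint_le_two_mul_numRad A B
  have hdiff := norm_sub_adjoint_le_two_mul_numRad A B
  have hre := norm_reOp_add_I_smul_imOp_le A B
  rcases abs_cases (‖A + B†‖ - ‖A - B†‖) with ⟨h, _⟩ | ⟨h, _⟩ <;> rw [h] <;> linarith
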